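/- Let a ∈ Iⁿ be a full sequence and b ∈ ℤ[i] with |b| ≥ 2√2 and Im b ≥ 1. Set p = p(a v_k) and q = q(a v_k). Then for every k ≥ 1 and every z ∈ C(a v_k b), one has dd(z, p/q) = 3k + 2. -/

import Mathlib

open Complex MeasureTheory Filter Set
open scoped ENNReal

noncomputable section

/-- The fundamental domain `𝔇 = {x+iy : x,y ∈ [-1/2,1/2)}`. -/
def fund : Set ℂ := {z : ℂ | z.re ∈ Set.Ico (-(1:ℝ)/2) (1/2) ∧ z.im ∈ Set.Ico (-(1:ℝ)/2) (1/2)}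

/-- `𝔇* = 𝔇 \ {0}`. -/
def fundStar : Set ℂ := fund \ {0}

/-- Nearest Gaussian integer `[z]`, the unique Gaussian integer with `z - [z] ∈ 𝔇`. -/
def nearestGauss (z : ℂ) : ℂ :=
  ((⌊z.re + 1/2⌋ : ℤ) : ℂ) + ((⌊z.im + 1/2⌋ : ℤ) : ℂ) * Complex.I

/-- The Hurwitz map `T(z) = 1/z - [1/z]` (with `T 0 = 0`). -/
def hT (z : ℂ) : ℂ := 1/z - nearestGauss (1/z)

/-- HCF partial quotient `a_{n+1}(z) = [1 / T^n(z)]` (0-based index). -/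
def hA (z : ℂ) (n : ℕ) : ℂ := nearestGauss (1 / (hT^[n] z))

/-- `z` is a Gaussian integer. -/
def IsGaussInt (z : ℂ) : Prop := ∃ a b : ℤ, z = (a : ℂ) + (b : ℂ) * Complex.I

/-- The set `I = {a ∈ ℤ[i] : |a| ≥ √2}` of possible partial quotients. -/
def setI : Set ℂ := {a : ℂ | IsGaussInt a ∧ Real.sqrt 2 ≤ ‖a‖}

/-- The matrix `((p(u), p(u⁻)), (q(u), q(u⁻))) = ((0,1),(1,0)) * ∏ ((u_j,1),(1,0))`. -/
def cfMatrix (u : List ℂ) : Matrix (Fin 2) (Fin 2) ℂ :=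
  !![0, 1; 1, 0] * (u.map fun a => !![a, 1; 1, 0]).prod

/-- Continuant numerator `p(u)`. -/
def contP (u : List ℂ) : ℂ := cfMatrix u 0 0

/-- Continuant denominator `q(u)`. -/
def contQ (u : List ℂ) : ℂ := cfMatrix u 1 0

/-- The cylinder `C(u) = {z ∈ 𝔇 : a_1(z) = u_1, …, a_n(z) = u_n}`. -/
def cylinder (u : List ℂ) : Set ℂ :=
  {z ∈ fund | ∀ j : Fin u.length, hA z j = u.get j}

/-- The prototype set `𝔇_u = T^n(C(u))`. -/
def proto (u : List ℂ) : Set ℂ := hT^[u.length] '' cylinder u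

/-- The Möbius transformation `T_u : z ↦ (p(u⁻) z + p(u)) / (q(u⁻) z + q(u))`. -/
def moebiusT (u : List ℂ) (z : ℂ) : ℂ :=
  (cfMatrix u 0 1 * z + cfMatrix u 0 0) / (cfMatrix u 1 1 * z + cfMatrix u 1 0)

/-- `u` is full if `𝔇_u = 𝔇`. -/
def FullSeq (u : List ℂ) : Prop := proto u = fund

/-- `u` is regular if `𝔇_u` has nonempty interior. -/
def RegularSeq (u : List ℂ) : Prop := (interior (proto u)).Nonempty

/-- The length of the (finite) HCF expansion of a Gaussian rational `w ∈ 𝔇*`: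
the least `N` with `T^N(w) = 0`. -/
def hcfLength (w : ℂ) : ℕ := sInf {N : ℕ | hT^[N] w = 0}

/-- `dd(z, w)`: the number of indices `1 ≤ n ≤ N` where the HCF partial quotients of `z`
and of the Gaussian rational `w` (with expansion of length `N`) differ. -/
def ddiff (z w : ℂ) : ℕ := {n : ℕ | n < hcfLength w ∧ hA z n ≠ hA w n}.ncard

/-- The sequence `v_k = (3, -2i)` followed by `k` repetitions of `(-2, 2i, -2, -2i)`. -/
def vSeq (k : ℕ) : List ℂ :=
  [3, -2*Complex.I] ++ (List.replicate k [-2, 2*Complex.I, -2, -2*Complex.I]).flatten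

/-- The sequence `ṽ_k = (3+i, 2i)` followed by `k` repetitions of `(-2+i, 2i, -2+i, 2i)`. -/
def vtSeq (k : ℕ) : List ℂ :=
  [3+Complex.I, 2*Complex.I] ++
    (List.replicate k [-2+Complex.I, 2*Complex.I, -2+Complex.I, 2*Complex.I]).flatten

/-- The lower order `λ(ψ) = liminf_{x→∞} (-log ψ(x)) / log x`, valued in `ℝ≥0∞`. -/
def lambdaPsi (ψ : ℝ → ℝ) : ℝ≥0∞ :=
  Filter.liminf (fun x : ℝ => ENNReal.ofReal (-Real.log (ψ x) / Real.log x)) Filter.atTop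

/-- The set `E(ψ)` of `z ∈ 𝔇*` admitting infinitely many Gaussian rational approximations
`p/q` with `|z - p/q| ≤ ψ(|q|)` whose HCF expansions differ from that of `z` in more and
more places. -/
def Epsi (ψ : ℝ → ℝ) : Set ℂ :=
  {z : ℂ | z ∈ fundStar ∧ ∃ p q : ℕ → ℂ,
    (∀ n, IsGaussInt (p n) ∧ IsGaussInt (q n) ∧ q n ≠ 0 ∧
      ‖z - p n / q n‖ ≤ ψ ‖q n‖) ∧
    Function.Injective (fun n => p n / q n) ∧
    Filter.Tendsto (fun n => ddiff z (p n / q n)) Filter.atTop Filter.atTop}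

/-- The `ψ`-approximable set `W(ψ)`. -/
def Wpsi (ψ : ℝ → ℝ) : Set ℂ :=
  {z : ℂ | z ∈ fundStar ∧ {pq : ℂ × ℂ | IsGaussInt pq.1 ∧ IsGaussInt pq.2 ∧ pq.2 ≠ 0 ∧
    ‖z - pq.1 / pq.2‖ ≤ ψ ‖pq.2‖}.Infinite}

end


/-!
The continuant matrices of `v_k` and of `ṽ_k = (3+i, 2i, (-2+i, 2i, -2+i, 2i)^k)` satisfy
`B(v_k) = ±B(ṽ_k) N` with `N = ((1, i), (0, 1))`, since `N B(block of v) = -B(block of ṽ) N`.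
As `N` fixes the first column, `a v_k` and `a ṽ_k` give the same rational `p/q`.
Along `ṽ_k` read backwards, the tails alternate between a segment of the lower edge of `𝔇` and an
arc of `|t + i| = 1`, so they stay in `𝔇`; since `a` is full, the value of `ṽ_k` lies in `𝔇_a`.
Hence `a ṽ_k` is the HCF expansion of `p/q`, while `z` starts with `a v_k`, and `v_k`, `ṽ_k`
differ in their first two digits and in three digits of every block.
-/

lemma nearestGauss_eq_zero_of_mem_fund {s : ℂ} (hs : s ∈ fund) : nearestGauss s = 0 := by
  obtain ⟨⟨hre₁, hre₂⟩, ⟨him₁, him₂⟩⟩ := hs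
  have hre : ⌊s.re + 1/2⌋ = 0 := Int.floor_eq_zero_iff.mpr ⟨by linarith, by linarith⟩
  have him : ⌊s.im + 1/2⌋ = 0 := Int.floor_eq_zero_iff.mpr ⟨by linarith, by linarith⟩
  rw [nearestGauss, hre, him]
  simp

lemma zero_mem_fund : (0 : ℂ) ∈ fund := by
  norm_num [fund]

lemma nearestGauss_add_of_isGaussInt {x : ℂ} (hx : IsGaussInt x) (s : ℂ) :
    nearestGauss (x + s) = x + nearestGauss s := by
  obtain ⟨m, n, rfl⟩ := hx
  have hre : ((m : ℂ) + n * I + s).re + 1/2 = m + (s.re + 1/2) := by simp; ring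
  have him : ((m : ℂ) + n * I + s).im + 1/2 = n + (s.im + 1/2) := by simp; ring
  simp only [nearestGauss, hre, him, Int.floor_intCast_add]
  push_cast
  ring

lemma nearestGauss_add_of_mem_fund {x s : ℂ} (hx : IsGaussInt x) (hs : s ∈ fund) :
    nearestGauss (x + s) = x := by
  rw [nearestGauss_add_of_isGaussInt hx, nearestGauss_eq_zero_of_mem_fund hs, add_zero]

lemma add_ne_zero_of_mem_fund {x s : ℂ} (hx : IsGaussInt x) (hx0 : x ≠ 0) (hs : s ∈ fund) :
    x + s ≠ 0 := by
  intro h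
  have := nearestGauss_add_of_mem_fund hx hs
  rw [h, nearestGauss_eq_zero_of_mem_fund zero_mem_fund] at this
  exact hx0 this.symm

lemma sub_nearestGauss_mem_fund (w : ℂ) : w - nearestGauss w ∈ fund := by
  have := Int.floor_le (w.re + 1/2)
  have := Int.lt_floor_add_one (w.re + 1/2)
  have := Int.floor_le (w.im + 1/2)
  have := Int.lt_floor_add_one (w.im + 1/2)
  refine ⟨⟨?_, ?_⟩, ⟨?_, ?_⟩⟩ <;> simp [nearestGauss] <;> linarith

lemma hT_mem_fund (z : ℂ) : hT z ∈ fund := sub_nearestGauss_mem_fund _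

lemma hA_succ (z : ℂ) (n : ℕ) : hA z (n + 1) = hA (hT z) n := by
  simp [hA, Function.iterate_succ_apply]

lemma hA_eq_zero_of_iterate_eq_zero {z : ℂ} {n : ℕ} (h : hT^[n] z = 0) : hA z n = 0 := by
  rw [hA, h, div_zero, nearestGauss_eq_zero_of_mem_fund zero_mem_fund]

lemma hT_one_div_add {x s : ℂ} (hx : IsGaussInt x) (hs : s ∈ fund) : hT (1 / (x + s)) = s := by
  rw [hT, one_div_one_div, nearestGauss_add_of_mem_fund hx hs, add_sub_cancel_left]

lemma hA_one_div_add {x s : ℂ} (hx : IsGaussInt x) (hs : s ∈ fund) : hA (1 / (x + s)) 0 = x := by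
  rw [hA, Function.iterate_zero_apply, one_div_one_div, nearestGauss_add_of_mem_fund hx hs]

lemma eq_one_div_add_hT {z x : ℂ} (h : hA z 0 = x) : z = 1 / (x + hT z) := by
  rw [hA, Function.iterate_zero_apply] at h
  rw [hT, h, add_sub_cancel, one_div_one_div]

noncomputable def cfEval (u : List ℂ) (t : ℂ) : ℂ := u.foldr (fun x s => 1 / (x + s)) t

@[simp] lemma cfEval_nil (t : ℂ) : cfEval [] t = t := rfl

@[simp] lemma cfEval_cons (x : ℂ) (u : List ℂ) (t : ℂ) :
    cfEval (x :: u) t = 1 / (x + cfEval u t) := rfl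

lemma cfEval_append (u v : List ℂ) (t : ℂ) : cfEval (u ++ v) t = cfEval u (cfEval v t) :=
  List.foldr_append

lemma contP_cons (x : ℂ) (u : List ℂ) : contP (x :: u) = contQ u := by
  simp [contP, contQ, cfMatrix, Matrix.mul_apply, Matrix.vecMul, dotProduct, Fin.sum_univ_two]

lemma contQ_cons (x : ℂ) (u : List ℂ) : contQ (x :: u) = x * contQ u + contP u := by
  simp [contP, contQ, cfMatrix, Matrix.mul_apply, Matrix.vecMul, dotProduct, Fin.sum_univ_two]

/-- `u` followed by `t` is an HCF expansion: the digits are nonzero Gaussian integers and every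
proper tail `cfEval (u.drop j) t`, `0 < j`, lies in `𝔇`. -/
def CfAdmissible : List ℂ → ℂ → Prop
  | [], _ => True
  | x :: u, t => IsGaussInt x ∧ x ≠ 0 ∧ cfEval u t ∈ fund ∧ CfAdmissible u t

@[simp] lemma cfAdmissible_nil (t : ℂ) : CfAdmissible [] t := trivial

@[simp] lemma cfAdmissible_cons (x : ℂ) (u : List ℂ) (t : ℂ) :
    CfAdmissible (x :: u) t ↔ IsGaussInt x ∧ x ≠ 0 ∧ cfEval u t ∈ fund ∧ CfAdmissible u t :=
  Iff.rfl

lemma cfAdmissible_append {u v : List ℂ} {t : ℂ} :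
    CfAdmissible (u ++ v) t ↔ CfAdmissible u (cfEval v t) ∧ CfAdmissible v t := by
  induction u with
  | nil => simp
  | cons x u ih => simp [ih, cfEval_append, and_assoc]

namespace CfAdmissible

variable {u : List ℂ} {t : ℂ}

lemma ne_zero (h : CfAdmissible u t) {x : ℂ} (hx : x ∈ u) : x ≠ 0 := by
  induction u with
  | nil => simp at hx
  | cons y u ih =>
    rcases List.mem_cons.mp hx with rfl | hx
    exacts [h.2.1, ih h.2.2.2 hx]

lemma iterate_hT_cfEval (h : CfAdmissible u t) : hT^[u.length] (cfEval u t) = t := by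
  induction u with
  | nil => rfl
  | cons x u ih =>
    rw [List.length_cons, Function.iterate_succ_apply, cfEval_cons, hT_one_div_add h.1 h.2.2.1]
    exact ih h.2.2.2

lemma hA_cfEval (h : CfAdmissible u t) (j : ℕ) (hj : j < u.length) :
    hA (cfEval u t) j = u[j] := by
  induction u generalizing j with
  | nil => simp at hj
  | cons x u ih =>
    rw [cfEval_cons]
    cases j with
    | zero => exact hA_one_div_add h.1 h.2.2.1
    | succ j =>
      rw [hA_succ, hT_one_div_add h.1 h.2.2.1]
      exact ih h.2.2.2 j (by simpa using hj)

lemma hcfLength_cfEval_zero (h : CfAdmissible u 0) : hcfLength (cfEval u 0) = u.length := by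
  refine le_antisymm (Nat.sInf_le h.iterate_hT_cfEval) (le_csInf ⟨_, h.iterate_hT_cfEval⟩ ?_)
  intro N hN
  by_contra! hlt
  exact h.ne_zero (List.getElem_mem hlt)
    ((h.hA_cfEval N hlt).symm.trans (hA_eq_zero_of_iterate_eq_zero hN))

lemma contQ_ne_zero_and_contP_eq (h : CfAdmissible u 0) :
    contQ u ≠ 0 ∧ contP u = cfEval u 0 * contQ u := by
  induction u with
  | nil => simp [contP, contQ, cfMatrix]
  | cons x u ih =>
    obtain ⟨hx, hx0, hfund, hu⟩ := h
    obtain ⟨hq, hp⟩ := ih hu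
    have hne := add_ne_zero_of_mem_fund hx hx0 hfund
    have hQ : contQ (x :: u) = (x + cfEval u 0) * contQ u := by rw [contQ_cons, hp]; ring
    refine ⟨hQ ▸ mul_ne_zero hne hq, ?_⟩
    rw [contP_cons, hQ, cfEval_cons]
    field_simp

lemma contP_div_contQ (h : CfAdmissible u 0) : contP u / contQ u = cfEval u 0 := by
  obtain ⟨hq, hp⟩ := h.contQ_ne_zero_and_contP_eq
  rw [hp, mul_div_cancel_right₀ _ hq]

end CfAdmissible

lemma hA_zero_and_hT_mem_cylinder {x : ℂ} {u : List ℂ} {z : ℂ} (hz : z ∈ cylinder (x :: u)) :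
    hA z 0 = x ∧ hT z ∈ cylinder u := by
  refine ⟨hz.2 ⟨0, by simp⟩, hT_mem_fund z, fun j => ?_⟩
  rw [← hA_succ]
  exact hz.2 ⟨j + 1, by simp⟩

lemma eq_cfEval_and_cfAdmissible_of_mem_cylinder {u : List ℂ} (hu : ∀ x ∈ u, x ∈ setI)
    {z : ℂ} (hz : z ∈ cylinder u) :
    z = cfEval u (hT^[u.length] z) ∧ CfAdmissible u (hT^[u.length] z) := by
  induction u generalizing z with
  | nil => simp
  | cons x u ih =>
    obtain ⟨hx, hTz⟩ := hA_zero_and_hT_mem_cylinder hz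
    obtain ⟨hxG, hxI⟩ := hu x List.mem_cons_self
    have hx0 : x ≠ 0 := by
      rintro rfl
      exact (Real.sqrt_pos.mpr two_pos).not_ge (by simpa using hxI)
    obtain ⟨hTz_eq, hadm⟩ := ih (fun y hy => hu y (List.mem_cons_of_mem x hy)) hTz
    rw [List.length_cons, Function.iterate_succ_apply, cfEval_cons, ← hTz_eq]
    exact ⟨eq_one_div_add_hT hx, hxG, hx0, hTz_eq ▸ hT_mem_fund z, hadm⟩

lemma cfAdmissible_of_mem_proto {u : List ℂ} (hu : ∀ x ∈ u, x ∈ setI) {t : ℂ}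
    (ht : t ∈ proto u) : CfAdmissible u t := by
  obtain ⟨z, hz, rfl⟩ := ht
  exact (eq_cfEval_and_cfAdmissible_of_mem_cylinder hu hz).2

noncomputable def cfProd (u : List ℂ) : Matrix (Fin 2) (Fin 2) ℂ :=
  (u.map fun a => !![a, 1; 1, 0]).prod

lemma cfMatrix_append (u v : List ℂ) : cfMatrix (u ++ v) = cfMatrix u * cfProd v := by
  simp [cfMatrix, cfProd]

lemma cfProd_append (u v : List ℂ) : cfProd (u ++ v) = cfProd u * cfProd v := by
  simp [cfProd]

lemma contP_div_contQ_eq_of_cfMatrix_eq {u v : List ℂ} {c : ℂ} (hc : c ≠ 0) (x : ℂ)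
    (h : cfMatrix u = c • (cfMatrix v * !![1, x; 0, 1])) :
    contP u / contQ u = contP v / contQ v := by
  simp only [contP, contQ, h, Matrix.smul_apply, Matrix.mul_apply, Fin.sum_univ_two]
  simp only [Matrix.of_apply, Matrix.cons_val', Matrix.cons_val_zero, Matrix.cons_val_one,
    Matrix.empty_val', Matrix.cons_val_fin_one, smul_eq_mul, mul_one, mul_zero, add_zero]
  exact mul_div_mul_left _ _ hc

def vBlock : List ℂ := [-2, 2 * I, -2, -2 * I]

def vtBlock : List ℂ := [-2 + I, 2 * I, -2 + I, 2 * I]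

lemma vSeq_succ (k : ℕ) : vSeq (k + 1) = vSeq k ++ vBlock := by
  simp [vSeq, vBlock, List.replicate_succ']

lemma vtSeq_succ (k : ℕ) : vtSeq (k + 1) = vtSeq k ++ vtBlock := by
  simp [vtSeq, vtBlock, List.replicate_succ']

lemma length_vSeq (k : ℕ) : (vSeq k).length = 4 * k + 2 := by
  induction k with
  | zero => simp [vSeq]
  | succ k ih => rw [vSeq_succ, List.length_append, ih]; simp [vBlock]; ring

lemma length_vtSeq (k : ℕ) : (vtSeq k).length = 4 * k + 2 := by
  induction k with
  | zero => simp [vtSeq]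
  | succ k ih => rw [vtSeq_succ, List.length_append, ih]; simp [vtBlock]; ring

lemma cfProd_vSeq_zero : cfProd (vSeq 0) = -(cfProd (vtSeq 0) * !![1, I; 0, 1]) := by
  simp only [vSeq, vtSeq, cfProd, List.replicate_zero, List.flatten_nil, List.append_nil,
    List.map_cons, List.map_nil, List.prod_cons, List.prod_nil, mul_one, Matrix.mul_fin_two]
  ext i j
  fin_cases i <;> fin_cases j <;> simp [Complex.ext_iff] <;> norm_num

lemma mul_cfProd_vBlock :
    !![1, I; 0, 1] * cfProd vBlock = -(cfProd vtBlock * !![1, I; 0, 1]) := by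
  simp only [vBlock, vtBlock, cfProd, List.map_cons, List.map_nil, List.prod_cons,
    List.prod_nil, mul_one, Matrix.mul_fin_two]
  ext i j
  fin_cases i <;> fin_cases j <;> simp [Complex.ext_iff] <;> norm_num

lemma cfProd_vSeq (k : ℕ) :
    cfProd (vSeq k) = (-1 : ℂ) ^ (k + 1) • (cfProd (vtSeq k) * !![1, I; 0, 1]) := by
  induction k with
  | zero => simpa using cfProd_vSeq_zero
  | succ k ih =>
    rw [vSeq_succ, vtSeq_succ, cfProd_append, cfProd_append, ih, Matrix.smul_mul, mul_assoc,
      mul_cfProd_vBlock, mul_neg, ← mul_assoc, smul_neg, ← neg_smul, pow_succ _ (k + 1),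
      mul_neg_one]

lemma contP_div_contQ_append_vSeq (u : List ℂ) (k : ℕ) :
    contP (u ++ vSeq k) / contQ (u ++ vSeq k) = contP (u ++ vtSeq k) / contQ (u ++ vtSeq k) := by
  refine contP_div_contQ_eq_of_cfMatrix_eq (pow_ne_zero (k + 1) (neg_ne_zero.mpr one_ne_zero)) I ?_
  rw [cfMatrix_append, cfMatrix_append, cfProd_vSeq, Matrix.mul_smul, mul_assoc]

def lowerEdge : Set ℂ := {t | t.im = -1/2 ∧ -1/2 ≤ t.re ∧ t.re ≤ 0}

def lowerArc : Set ℂ :=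
  {t | t.re ^ 2 + (t.im + 1) ^ 2 = 1 ∧ -1/2 ≤ t.re ∧ t.re ≤ -1/4 ∧ -1/2 ≤ t.im ∧ t.im ≤ 0}

lemma lowerEdge_subset_fund : lowerEdge ⊆ fund := by
  rintro t ⟨h₁, h₂, h₃⟩
  exact ⟨⟨h₂, by linarith⟩, ⟨h₁.ge, by linarith⟩⟩

lemma lowerArc_subset_fund : lowerArc ⊆ fund := by
  rintro t ⟨-, h₂, h₃, h₄, h₅⟩
  exact ⟨⟨h₂, by linarith⟩, ⟨h₄, by linarith⟩⟩

lemma re_im_one_div {c : ℂ} {x y : ℝ} (hx : c.re = x) (hy : c.im = y) :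
    (1 / c).re = x / (x ^ 2 + y ^ 2) ∧ (1 / c).im = -y / (x ^ 2 + y ^ 2) := by
  rw [one_div, Complex.inv_re, Complex.inv_im, Complex.normSq_apply, hx, hy]
  constructor <;> ring_nf

lemma one_div_two_I_add_mem_lowerEdge {t : ℂ} (ht : t = 0 ∨ t ∈ lowerArc) :
    1 / (2 * I + t) ∈ lowerEdge := by
  obtain ⟨hre, him⟩ := re_im_one_div (c := 2 * I + t) (x := t.re) (y := t.im + 2)
    (by simp) (by simp; ring)
  rcases ht with rfl | ⟨hc, h₁, h₂, h₃, h₄⟩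
  · refine ⟨?_, ?_, ?_⟩ <;> norm_num [hre, him]
  · have hN : t.re ^ 2 + (t.im + 2) ^ 2 = 2 * (t.im + 2) := by linarith
    have hpos : 0 < t.im + 2 := by linarith
    refine ⟨?_, ?_, ?_⟩
    · rw [him, hN]
      field_simp
    · rw [hre, hN, le_div_iff₀ (by positivity)]; nlinarith
    · rw [hre, hN]; exact div_nonpos_of_nonpos_of_nonneg (by linarith) (by positivity)

lemma one_div_neg_two_add_I_add_mem_lowerArc {t : ℂ} (ht : t ∈ lowerEdge) :
    1 / ((-2 + I) + t) ∈ lowerArc := by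
  obtain ⟨h₁, h₂, h₃⟩ := ht
  obtain ⟨hre, him⟩ := re_im_one_div (c := (-2 + I) + t) (x := t.re - 2) (y := 1 / 2)
    (by simp; ring) (by simp [h₁]; norm_num)
  have hN : 0 < (t.re - 2) ^ 2 + (1 / 2) ^ 2 := by positivity
  refine ⟨?_, ?_, ?_, ?_, ?_⟩
  · rw [hre, him]; field_simp; ring
  · rw [hre, le_div_iff₀ hN]; nlinarith
  · rw [hre, div_le_iff₀ hN]; nlinarith
  · rw [him, le_div_iff₀ hN]; nlinarith
  · rw [him]; exact div_nonpos_of_nonpos_of_nonneg (by norm_num) hN.le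

lemma one_div_three_add_I_add_mem_fund {t : ℂ} (ht : t ∈ lowerEdge) :
    1 / ((3 + I) + t) ∈ fund := by
  obtain ⟨h₁, h₂, h₃⟩ := ht
  obtain ⟨hre, him⟩ := re_im_one_div (c := (3 + I) + t) (x := 3 + t.re) (y := 1 / 2)
    (by simp) (by simp [h₁]; norm_num)
  have hN : 0 < (3 + t.re) ^ 2 + (1 / 2) ^ 2 := by positivity
  refine ⟨⟨?_, ?_⟩, ⟨?_, ?_⟩⟩
  · rw [hre, le_div_iff₀ hN]; nlinarith
  · rw [hre, div_lt_iff₀ hN]; nlinarith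
  · rw [him, le_div_iff₀ hN]; nlinarith
  · rw [him, div_lt_iff₀ hN]; nlinarith

lemma mem_fund_of_eq_zero_or_mem_lowerArc {s : ℂ} (hs : s = 0 ∨ s ∈ lowerArc) : s ∈ fund := by
  rcases hs with rfl | hs
  exacts [zero_mem_fund, lowerArc_subset_fund hs]

lemma cfAdmissible_vtBlock {s : ℂ} (hs : s = 0 ∨ s ∈ lowerArc) :
    CfAdmissible vtBlock s ∧ cfEval vtBlock s ∈ lowerArc := by
  have hG₁ : IsGaussInt (-2 + I) := ⟨-2, 1, by push_cast; ring⟩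
  have hG₂ : IsGaussInt (2 * I) := ⟨0, 2, by push_cast; ring⟩
  have hne₁ : (-2 + I : ℂ) ≠ 0 := by simp [Complex.ext_iff]
  have hne₂ : (2 * I : ℂ) ≠ 0 := by simp
  have h₁ := one_div_two_I_add_mem_lowerEdge hs
  have h₂ := one_div_neg_two_add_I_add_mem_lowerArc h₁
  have h₃ := one_div_two_I_add_mem_lowerEdge (Or.inr h₂)
  have h₄ := one_div_neg_two_add_I_add_mem_lowerArc h₃
  simp only [vtBlock, cfAdmissible_cons, cfEval_cons, cfEval_nil, cfAdmissible_nil, and_true]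
  exact ⟨⟨hG₁, hne₁, lowerEdge_subset_fund h₃, hG₂, hne₂, lowerArc_subset_fund h₂, hG₁, hne₁,
    lowerEdge_subset_fund h₁, hG₂, hne₂, mem_fund_of_eq_zero_or_mem_lowerArc hs⟩, h₄⟩

lemma cfAdmissible_replicate_vtBlock (k : ℕ) :
    CfAdmissible (List.replicate k vtBlock).flatten 0 ∧
      (cfEval (List.replicate k vtBlock).flatten 0 = 0 ∨
        cfEval (List.replicate k vtBlock).flatten 0 ∈ lowerArc) := by
  induction k with
  | zero => simp
  | succ k ih =>
    obtain ⟨hadm, hval⟩ := cfAdmissible_vtBlock ih.2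
    rw [List.replicate_succ, List.flatten_cons, cfAdmissible_append, cfEval_append]
    exact ⟨⟨hadm, ih.1⟩, Or.inr hval⟩

lemma vtSeq_eq (k : ℕ) : vtSeq k = [3 + I, 2 * I] ++ (List.replicate k vtBlock).flatten := rfl

lemma cfAdmissible_vtSeq (k : ℕ) :
    CfAdmissible (vtSeq k) 0 ∧ cfEval (vtSeq k) 0 ∈ fund := by
  obtain ⟨hadm, hval⟩ := cfAdmissible_replicate_vtBlock k
  have hedge := one_div_two_I_add_mem_lowerEdge hval
  refine ⟨?_, ?_⟩
  · rw [vtSeq_eq, cfAdmissible_append]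
    refine ⟨?_, hadm⟩
    simp only [cfAdmissible_cons, cfEval_cons, cfEval_nil, cfAdmissible_nil, and_true]
    exact ⟨⟨3, 1, by push_cast; ring⟩, by simp [Complex.ext_iff], lowerEdge_subset_fund hedge,
      ⟨0, 2, by push_cast; ring⟩, by simp, mem_fund_of_eq_zero_or_mem_lowerArc hval⟩
  · rw [vtSeq_eq, cfEval_append, cfEval_cons, cfEval_cons, cfEval_nil]
    exact one_div_three_add_I_add_mem_fund hedge

def mismatches {α : Type*} [DecidableEq α] (u v : List α) : ℕ :=
  ((Finset.range u.length).filter fun j => u[j]? ≠ v[j]?).card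

section mismatches

variable {α : Type*} [DecidableEq α]

@[simp] lemma mismatches_self (u : List α) : mismatches u u = 0 := by
  simp [mismatches]

lemma mismatches_append {u v u' v' : List α} (h : u.length = v.length) :
    mismatches (u ++ u') (v ++ v') = mismatches u v + mismatches u' v' := by
  simp only [mismatches, Finset.card_filter, List.length_append, Finset.sum_range_add]
  congr 1 <;> refine Finset.sum_congr rfl fun j hj => ?_
  · rw [Finset.mem_range] at hj
    rw [List.getElem?_append_left hj, List.getElem?_append_left (h ▸ hj)]
  · simp [List.getElem?_append_right, h]

end mismatches

lemma mismatches_vSeq_vtSeq (k : ℕ) : mismatches (vSeq k) (vtSeq k) = 3 * k + 2 := by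
  induction k with
  | zero =>
    norm_num [mismatches, vSeq, vtSeq, Finset.card_filter, Finset.sum_range_succ, Complex.ext_iff]
  | succ k ih =>
    rw [vSeq_succ, vtSeq_succ, mismatches_append (by rw [length_vSeq, length_vtSeq]), ih]
    have : mismatches vBlock vtBlock = 3 := by
      norm_num [mismatches, vBlock, vtBlock, Finset.card_filter, Finset.sum_range_succ,
        Complex.ext_iff]
    rw [this]
    ring

lemma ddiff_eq_mismatches {z w : ℂ} {u v : List ℂ} (huv : u.length = v.length)
    (hw : hcfLength w = v.length) (hAz : ∀ j (hj : j < u.length), hA z j = u[j])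
    (hAw : ∀ j (hj : j < v.length), hA w j = v[j]) : ddiff z w = mismatches u v := by
  rw [ddiff, mismatches, ← Set.ncard_coe_finset, hw, ← huv]
  congr 1
  ext j
  simp only [Set.mem_ofPred_eq, Finset.coe_filter, Finset.mem_range, and_congr_right_iff]
  intro hj
  rw [List.getElem?_eq_getElem hj, List.getElem?_eq_getElem (huv ▸ hj), hAz j hj,
    hAw j (huv ▸ hj), ne_eq, ne_eq, Option.some_inj]

lemma hA_of_mem_cylinder_append {u v : List ℂ} {z : ℂ} (hz : z ∈ cylinder (u ++ v))
    (j : ℕ) (hj : j < u.length) : hA z j = u[j] := by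
  rw [hz.2 ⟨j, by simp; omega⟩, List.get_eq_getElem, List.getElem_append_left]

theorem ddiff_eq_on_cylinder_a_vk_b_general (a : List ℂ) (ha : ∀ x ∈ a, x ∈ setI)
    (hfull : FullSeq a)
    (b : ℂ)
    (k : ℕ)
    (z : ℂ) (hz : z ∈ cylinder (a ++ vSeq k ++ [b])) :
    ddiff z (contP (a ++ vSeq k) / contQ (a ++ vSeq k)) = 3 * k + 2 := by
  obtain ⟨hvt, hvt_fund⟩ := cfAdmissible_vtSeq k
  have hadm : CfAdmissible (a ++ vtSeq k) 0 := by
    rw [cfAdmissible_append]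
    exact ⟨cfAdmissible_of_mem_proto ha (hfull ▸ hvt_fund), hvt⟩
  have hlen : (a ++ vSeq k).length = (a ++ vtSeq k).length := by
    simp [length_vSeq, length_vtSeq]
  rw [contP_div_contQ_append_vSeq, hadm.contP_div_contQ,
    ddiff_eq_mismatches hlen hadm.hcfLength_cfEval_zero (hA_of_mem_cylinder_append hz)
      hadm.hA_cfEval,
    mismatches_append rfl, mismatches_self, mismatches_vSeq_vtSeq, zero_add]

theorem ddiff_eq_on_cylinder_a_vk_b (a : List ℂ) (ha : ∀ x ∈ a, x ∈ setI)
    (hfull : FullSeq a)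
    (b : ℂ) (hbG : IsGaussInt b) (hb2 : 2 * Real.sqrt 2 ≤ ‖b‖) (hbim : 1 ≤ b.im)
    (k : ℕ) (hk : 1 ≤ k)
    (z : ℂ) (hz : z ∈ cylinder (a ++ vSeq k ++ [b])) :
    ddiff z (contP (a ++ vSeq k) / contQ (a ++ vSeq k)) = 3 * k + 2 :=
  ddiff_eq_on_cylinder_a_vk_b_general a ha hfull b k z hz
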